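/- Let A = [A_1, …, A_n] be an n×n×n ASHM such that L(A) = ∑_k k·A_k is a Latin square (every row and column of L(A) is a permutation of {1,…,n}). Then each A_k is a permutation matrix, i.e., A is a permutation hypermatrix. -/

import Mathlib

open Finset

/-- A line (vector) of integers is "alternating" in the ASM sense:
all prefix sums are 0 or 1, and the total sum is 1. This is equivalent to the
nonzero entries being ±1, alternating in sign, beginning and ending with +1. -/
def AltLine {n : ℕ} (v : Fin n → ℤ) : Prop :=
  (∀ t : Fin n, (∑ s ∈ Finset.univ.filter (fun s => s ≤ t), v s) = 0 ∨
      (∑ s ∈ Finset.univ.filter (fun s => s ≤ t), v s) = 1) ∧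
  (∑ s, v s) = 1

/-- Alternating sign matrix. -/
def IsAsm {n : ℕ} (A : Matrix (Fin n) (Fin n) ℤ) : Prop :=
  (∀ i, AltLine (fun j => A i j)) ∧ (∀ j, AltLine (fun i => A i j))

/-- Alternating sign hypermatrix: every line in each of the three directions alternates. -/
def IsAshm {n : ℕ} (A : Fin n → Fin n → Fin n → ℤ) : Prop :=
  (∀ j k, AltLine (fun i => A i j k)) ∧
  (∀ i k, AltLine (fun j => A i j k)) ∧
  (∀ i j, AltLine (fun k => A i j k))

/-- The ASHM-Latin square `L(A) = 1·A₁ + 2·A₂ + ⋯ + n·Aₙ` (planes indexed from 1). -/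
def Lmat {n : ℕ} (A : Fin n → Fin n → Fin n → ℤ) (i j : Fin n) : ℤ :=
  ∑ k : Fin n, ((k.1 : ℤ) + 1) * A i j k

/-- Permutation hypermatrix: a (0,1)-hypermatrix with exactly one 1 in each line. -/
def IsPermHyper {n : ℕ} (A : Fin n → Fin n → Fin n → ℤ) : Prop :=
  (∀ i j k : Fin n, A i j k = 0 ∨ A i j k = 1) ∧
  (∀ j k : Fin n, ∃! i : Fin n, A i j k = 1) ∧
  (∀ i k : Fin n, ∃! j : Fin n, A i j k = 1) ∧
  (∀ i j : Fin n, ∃! k : Fin n, A i j k = 1)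

/-! Fix a row `i` and let `S j t = A i j 1 + ⋯ + A i j t` be the prefix sums along the third
direction. They are 0 or 1, summation by parts gives `∑ t, S j t = n + 1 - L(A) i j`, and the
line sums in the second direction give `∑ j, S j t = t`. As row `i` of `L(A)` takes every value
`1, …, n`, the sequences `S j ·` have totals `n, n - 1, …, 1`. By induction on `t`, the only way
to meet the column sums `t` is that `S j t = 1` exactly when `t > n - ∑ S j`: every `S j ·` is a
staircase `0 ⋯ 0 1 ⋯ 1`. Hence its differences `A i j k` are 0 or 1, and a 0/1 line with sum 1
contains exactly one 1. -/

lemma sum_eq_card_filter_eq_one {ι : Type*} [Fintype ι] {x : ι → ℤ}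
    (h01 : ∀ s, x s = 0 ∨ x s = 1) : ∑ s, x s = #{s | x s = 1} := by
  rw [← sum_boole]
  refine sum_congr rfl fun s _ => ?_
  rcases h01 s with h | h <;> simp [h]

lemma existsUnique_eq_one {ι : Type*} [Fintype ι] {x : ι → ℤ}
    (h01 : ∀ s, x s = 0 ∨ x s = 1) (hsum : ∑ s, x s = 1) : ∃! s, x s = 1 := by
  rw [sum_eq_card_filter_eq_one h01, Nat.cast_eq_one, card_eq_one] at hsum
  obtain ⟨a, ha⟩ := hsum
  refine ⟨a, by simpa using ha.ge (mem_singleton_self a), fun b hb => ?_⟩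
  have hb' : b ∈ ({s | x s = 1} : Finset ι) := by simpa using hb
  simpa [ha] using hb'

section PrefixSum

variable {n : ℕ}

def prefixSum (v : Fin n → ℤ) (t : Fin n) : ℤ :=
  ∑ s ∈ Iic t, v s

lemma AltLine.prefixSum_eq_zero_or_one {v : Fin n → ℤ} (h : AltLine v) (t : Fin n) :
    prefixSum v t = 0 ∨ prefixSum v t = 1 := by
  simpa only [prefixSum, filter_ge_eq_Iic] using h.1 t

lemma sum_prefixSum (v : Fin n → ℤ) : ∑ t, prefixSum v t = ∑ s, ((n : ℤ) - s) * v s := by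
  simp only [prefixSum, ← filter_ge_eq_Iic, sum_filter]
  rw [sum_comm]
  refine sum_congr rfl fun s _ => ?_
  rw [← sum_filter, filter_le_eq_Ici, sum_const, Fin.card_Ici, nsmul_eq_mul,
    Nat.cast_sub s.2.le]

lemma sum_mul_add_sum_prefixSum (v : Fin n → ℤ) :
    ∑ k : Fin n, ((k : ℤ) + 1) * v k + ∑ t, prefixSum v t = (n + 1) * ∑ k, v k := by
  rw [sum_prefixSum, ← sum_add_distrib, mul_sum]
  exact sum_congr rfl fun k _ => by ring

lemma sum_prefixSum_of_sum_eq_one {ι : Type*} [Fintype ι] {w : ι → Fin n → ℤ}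
    (hw : ∀ s, ∑ j, w j s = 1) (t : Fin n) : ∑ j, prefixSum (w j) t = t + 1 := by
  simp only [prefixSum]
  rw [sum_comm, sum_congr rfl fun s _ => hw s, sum_const, Fin.card_Iic, nsmul_one]
  push_cast
  rfl

lemma eq_zero_or_one_of_monotone_prefixSum {v : Fin n → ℤ}
    (h01 : ∀ t, prefixSum v t = 0 ∨ prefixSum v t = 1) (hmono : Monotone (prefixSum v))
    (k : Fin n) : v k = 0 ∨ v k = 1 := by
  have hk := add_sum_Iio_eq_sum_Iic (f := v) k
  by_cases hmin : IsMin k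
  · rw [hmin.finsetIio_eq, sum_empty, add_zero] at hk
    exact hk ▸ h01 k
  · rw [← Finset.Iic_pred_eq_Iio_of_not_isMin hmin] at hk
    have hle := hmono (Order.pred_le k)
    simp only [prefixSum] at h01 hle
    rcases h01 k with h | h <;> rcases h01 (Order.pred k) with h' | h' <;> omega

end PrefixSum

section Staircase

variable {ι : Type*} [Fintype ι] {n : ℕ}

lemma sum_lt_of_eq_zero {x : Fin n → ℤ} (h01 : ∀ s, x s = 0 ∨ x s = 1) {t : Fin n}
    (ht : x t = 0) (hbelow : ∀ s < t, x s = 1 → (n : ℤ) - s ≤ ∑ r, x r) :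
    ∑ r, x r < n - t := by
  rw [sum_eq_card_filter_eq_one h01] at hbelow ⊢
  by_contra! hc
  have hcn : #{s | x s = 1} ≤ n := (card_le_univ _).trans_eq (Fintype.card_fin n)
  have htn := t.2
  set k : Fin n := ⟨n - #{s | x s = 1}, by omega⟩
  have hk : (k : ℕ) = n - #{s | x s = 1} := rfl
  have hsub : ({s | x s = 1} : Finset (Fin n)) ⊆ (Ici k).erase t := by
    intro s hs
    rw [mem_filter] at hs
    rw [mem_erase, mem_Ici, Fin.le_def]
    refine ⟨by rintro rfl; simp [ht] at hs, ?_⟩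
    rcases lt_or_ge s t with hst | hst
    · have := hbelow s hst hs.2
      omega
    · rw [Fin.le_def] at hst
      omega
  have hcard := card_le_card hsub
  rw [card_erase_of_mem (by rw [mem_Ici, Fin.le_def]; omega), Fin.card_Ici] at hcard
  omega

/-- `{j | S j t = 1}` has `t + 1` elements and contains, by induction on `t`, the at least
`t + 1` indices `j` with `∑ S j ≥ n - t`; so the two sets coincide. -/
lemma eq_one_iff_of_sum_eq {S : ι → Fin n → ℤ} (h01 : ∀ j t, S j t = 0 ∨ S j t = 1)
    (hcol : ∀ t : Fin n, ∑ j, S j t = t + 1) (hrow : ∀ m : Fin n, ∃ j, ∑ t, S j t = n - m)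
    (t : Fin n) (j : ι) : S j t = 1 ↔ (n : ℤ) - t ≤ ∑ s, S j s := by
  induction t using WellFoundedLT.induction generalizing j with
  | _ t ih =>
  choose f hf using hrow
  have hcardT : #{j | S j t = 1} = t + 1 := by
    have := hcol t
    rw [sum_eq_card_filter_eq_one (h01 · t)] at this
    exact_mod_cast this
  have hcardU : t + 1 ≤ #{j | (n : ℤ) - t ≤ ∑ s, S j s} := by
    rw [← Fin.card_Iic t]
    refine card_le_card_of_injOn f (fun m hm => ?_) (fun m₁ _ m₂ _ h => ?_)
    · simp only [mem_coe, mem_filter, mem_univ, true_and, mem_Iic] at hm ⊢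
      rw [hf m]
      have : m.val ≤ t.val := hm
      omega
    · have := hf m₁
      rw [h, hf m₂] at this
      exact Fin.ext (by omega)
  have hsub : ({j | (n : ℤ) - t ≤ ∑ s, S j s} : Finset ι) ⊆ ({j | S j t = 1} : Finset ι) := by
    intro j hj
    simp only [mem_filter, mem_univ, true_and] at hj ⊢
    by_contra hne
    exact (sum_lt_of_eq_zero (h01 j) ((h01 j t).resolve_right hne)
      fun s hs => (ih s hs j).1).not_ge hj
  have heq := eq_of_subset_of_card_le hsub (hcardT ▸ hcardU)
  simpa using (Finset.ext_iff.1 heq j).symm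

lemma monotone_of_sum_eq {S : ι → Fin n → ℤ} (h01 : ∀ j t, S j t = 0 ∨ S j t = 1)
    (hcol : ∀ t : Fin n, ∑ j, S j t = t + 1) (hrow : ∀ m : Fin n, ∃ j, ∑ t, S j t = n - m)
    (j : ι) : Monotone (S j) := by
  intro s t hst
  have key := eq_one_iff_of_sum_eq h01 hcol hrow
  rcases h01 j s with h | h
  · rcases h01 j t with h' | h' <;> omega
  · have hst' : (s : ℤ) ≤ t := by exact_mod_cast hst
    rw [h, (key t j).2 (by linarith [(key s j).1 h])]

end Staircase

theorem stmt6_general {n : ℕ} (A : Fin n → Fin n → Fin n → ℤ) (hA : IsAshm A)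
    (hrow : ∀ i : Fin n, ∀ m : Fin n, ∃! j : Fin n, Lmat A i j = (m.1 : ℤ) + 1) :
    IsPermHyper A := by
  obtain ⟨hlineI, hlineJ, hlineK⟩ := hA
  have hentries : ∀ i j k, A i j k = 0 ∨ A i j k = 1 := by
    intro i
    have hmono : ∀ j, Monotone (prefixSum (A i j)) := by
      refine monotone_of_sum_eq (fun j => (hlineK i j).prefixSum_eq_zero_or_one)
        (sum_prefixSum_of_sum_eq_one fun s => (hlineJ i s).2) fun m => ?_
      obtain ⟨j, hj, -⟩ := hrow i m
      refine ⟨j, ?_⟩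
      have := sum_mul_add_sum_prefixSum (A i j)
      rw [(hlineK i j).2, ← Lmat, hj] at this
      linarith
    exact fun j =>
      eq_zero_or_one_of_monotone_prefixSum (hlineK i j).prefixSum_eq_zero_or_one (hmono j)
  exact ⟨hentries, fun j k => existsUnique_eq_one (hentries · j k) (hlineI j k).2,
    fun i k => existsUnique_eq_one (hentries i · k) (hlineJ i k).2,
    fun i j => existsUnique_eq_one (hentries i j) (hlineK i j).2⟩

theorem stmt6 {n : ℕ} (A : Fin n → Fin n → Fin n → ℤ) (hA : IsAshm A)
    (hrow : ∀ i : Fin n, ∀ m : Fin n, ∃! j : Fin n, Lmat A i j = (m.1 : ℤ) + 1)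
    (hcol : ∀ j : Fin n, ∀ m : Fin n, ∃! i : Fin n, Lmat A i j = (m.1 : ℤ) + 1) :
    IsPermHyper A :=
  stmt6_general A hA hrow
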